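/- arXiv:1508.02464 — 2 statements merged into one kernel-verified Lean document; each statement's English description precedes it below -/
import Mathlib

section
/- For every n ≥ 3 the following identity holds in ℚ: if n ≡ 0 (mod 3) then b (n-3)^2 · b n^2 + b (n-3) · b (n-1)^3 + 3 · b (n-2)^3 · b n − 3 · b (n-2)^2 · b (n-1)^2 = 0; if n ≡ 1 (mod 3) then 3 · b (n-3)^2 · b n^2 + b (n-3) · b (n-1)^3 + b (n-2)^3 · b n − b (n-2)^2 · b (n-1)^2 = 0; and if n ≡ 2 (mod 3) then b (n-3)^2 · b n^2 + 3 · b (n-3) · b (n-1)^3 + b (n-2)^3 · b n − 3 · b (n-2)^2 · b (n-1)^2 = 0. -/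
/-- The ECHO sequence. -/
def echo : ℕ → ℚ
  | 0 => 1
  | 1 => 1
  | 2 => 2
  | 3 => 1
  | n + 4 =>
      (echo (n + 3) * echo (n + 1) - (if 3 ∣ (n + 4) then 3 else 1) * echo (n + 2) ^ 2) /
        echo n

instance : Fact (Nat.Prime 5) := ⟨by norm_num⟩

def Ttab : List (ZMod 5) := [1,1,2,1,2,3,3,2,1,2,1,1,4,4,3,4,3,2,2,3,4,3,4,4]
def T (n : ℕ) : ZMod 5 := Ttab.getD (n % 24) 0

lemma T_ne_zero (n : ℕ) : T n ≠ 0 := by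
  have h : ∀ r < 24, Ttab.getD r 0 ≠ 0 := by decide
  exact h (n % 24) (Nat.mod_lt _ (by norm_num))

lemma T_step (n : ℕ) :
    T (n+3) * T (n+1) - (if 3 ∣ (n+4) then (3 : ZMod 5) else 1) * T (n+2) ^ 2 =
      T (n+4) * T n := by
  have h : ∀ r < 24,
      Ttab.getD ((r+3) % 24) 0 * Ttab.getD ((r+1) % 24) 0 -
        (if 3 ∣ (r+4) then (3 : ZMod 5) else 1) * Ttab.getD ((r+2) % 24) 0 ^ 2 =
      Ttab.getD ((r+4) % 24) 0 * Ttab.getD (r % 24) 0 := by decide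
  have key := h (n % 24) (Nat.mod_lt _ (by norm_num))
  rw [Nat.mod_mod_of_dvd _ dvd_rfl] at key
  simp only [T]
  rw [show (n+3) % 24 = (n % 24 + 3) % 24 by omega, show (n+1) % 24 = (n % 24 + 1) % 24 by omega,
    show (n+2) % 24 = (n % 24 + 2) % 24 by omega, show (n+4) % 24 = (n % 24 + 4) % 24 by omega]
  simp only [show (3 ∣ (n+4)) ↔ (3 ∣ (n % 24 + 4)) by omega]
  exact key

def EchoRep (n : ℕ) : Prop :=
  ∃ a b : ℤ, ((b : ZMod 5) ≠ 0) ∧ echo n * (b : ℚ) = (a : ℚ) ∧ ((a : ZMod 5) = T n * (b : ZMod 5))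

lemma rep_ne_zero {n : ℕ} (h : EchoRep n) : echo n ≠ 0 := by
  obtain ⟨a, b, hb, he, hm⟩ := h
  intro h0
  rw [h0, zero_mul] at he
  have ha : (a : ZMod 5) ≠ 0 := by
    rw [hm]; exact mul_ne_zero (T_ne_zero n) hb
  have : a = 0 := by exact_mod_cast he.symm
  simp [this] at ha

lemma echo_rec (n : ℕ) (h : echo n ≠ 0) :
    echo (n+4) * echo n =
      echo (n+3) * echo (n+1) - (if 3 ∣ (n+4) then (3:ℚ) else 1) * echo (n+2) ^ 2 := by
  rw [echo]
  exact div_mul_cancel₀ _ h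

lemma rep_step (n : ℕ) (h0 : EchoRep n) (h1 : EchoRep (n+1)) (h2 : EchoRep (n+2)) (h3 : EchoRep (n+3)) :
    EchoRep (n+4) := by
  obtain ⟨a0, b0, hb0, he0, hm0⟩ := h0
  obtain ⟨a1, b1, hb1, he1, hm1⟩ := h1
  obtain ⟨a2, b2, hb2, he2, hm2⟩ := h2
  obtain ⟨a3, b3, hb3, he3, hm3⟩ := h3
  have hne : echo n ≠ 0 := rep_ne_zero ⟨a0, b0, hb0, he0, hm0⟩
  have hrec := echo_rec n hne
  have ha0 : (a0 : ZMod 5) ≠ 0 := by rw [hm0]; exact mul_ne_zero (T_ne_zero n) hb0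
  by_cases hd : 3 ∣ (n+4)
  · refine ⟨(a3*a1*b2^2 - 3*a2^2*b3*b1)*b0, b3*b1*b2^2*a0, ?_, ?_, ?_⟩
    · push_cast
      exact mul_ne_zero (mul_ne_zero (mul_ne_zero hb3 hb1) (pow_ne_zero 2 hb2)) ha0
    · rw [if_pos hd] at hrec
      push_cast
      linear_combination (-(echo (n+4) * (b3:ℚ) * b1 * b2^2)) * he0 +
        ((b3:ℚ) * b1 * b2^2 * b0) * hrec + (echo (n+1) * (b1:ℚ) * b2^2 * b0) * he3 +
        ((a3:ℚ) * b2^2 * b0) * he1 - (3 * (echo (n+2) * (b2:ℚ) + a2) * b3 * b1 * b0) * he2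
    · have ht := T_step n
      rw [if_pos hd] at ht
      push_cast
      linear_combination ((a1 : ZMod 5) * b2^2 * b0) * hm3 + (T (n+3) * (b3:ZMod 5) * b2^2 * b0) * hm1 -
        (3 * ((a2:ZMod 5) + T (n+2) * b2) * b3 * b1 * b0) * hm2 +
        ((b3:ZMod 5) * b1 * b2^2 * b0) * ht + (T (n+4) * (b3:ZMod 5) * b1 * b2^2) * hm0.symm
  · refine ⟨(a3*a1*b2^2 - a2^2*b3*b1)*b0, b3*b1*b2^2*a0, ?_, ?_, ?_⟩
    · push_cast
      exact mul_ne_zero (mul_ne_zero (mul_ne_zero hb3 hb1) (pow_ne_zero 2 hb2)) ha0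
    · rw [if_neg hd] at hrec
      push_cast
      linear_combination (-(echo (n+4) * (b3:ℚ) * b1 * b2^2)) * he0 +
        ((b3:ℚ) * b1 * b2^2 * b0) * hrec + (echo (n+1) * (b1:ℚ) * b2^2 * b0) * he3 +
        ((a3:ℚ) * b2^2 * b0) * he1 - ((echo (n+2) * (b2:ℚ) + a2) * b3 * b1 * b0) * he2
    · have ht := T_step n
      rw [if_neg hd] at ht
      push_cast
      linear_combination ((a1 : ZMod 5) * b2^2 * b0) * hm3 + (T (n+3) * (b3:ZMod 5) * b2^2 * b0) * hm1 -
        (((a2:ZMod 5) + T (n+2) * b2) * b3 * b1 * b0) * hm2 +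
        ((b3:ZMod 5) * b1 * b2^2 * b0) * ht + (T (n+4) * (b3:ZMod 5) * b1 * b2^2) * hm0.symm

lemma rep_all : ∀ n, EchoRep n := by
  have base0 : EchoRep 0 := ⟨1, 1, by decide, by norm_num [echo], by decide⟩
  have base1 : EchoRep 1 := ⟨1, 1, by decide, by norm_num [echo], by decide⟩
  have base2 : EchoRep 2 := ⟨2, 1, by decide, by norm_num [echo], by decide⟩
  have base3 : EchoRep 3 := ⟨1, 1, by decide, by norm_num [echo], by decide⟩
  have main : ∀ n, EchoRep n ∧ EchoRep (n+1) ∧ EchoRep (n+2) ∧ EchoRep (n+3) := by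
    intro n
    induction n with
    | zero => exact ⟨base0, base1, base2, base3⟩
    | succ k ih =>
        exact ⟨ih.2.1, ih.2.2.1, ih.2.2.2, rep_step k ih.1 ih.2.1 ih.2.2.1 ih.2.2.2⟩
  exact fun n => (main n).1

lemma echo_ne_zero (n : ℕ) : echo n ≠ 0 := rep_ne_zero (rep_all n)

lemma key : ∀ m : ℕ,
    ((m+3) % 3 = 0 →
      echo m ^ 2 * echo (m+3) ^ 2 + echo m * echo (m+2) ^ 3 +
        3 * echo (m+1) ^ 3 * echo (m+3) - 3 * echo (m+1) ^ 2 * echo (m+2) ^ 2 = 0) ∧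
    ((m+3) % 3 = 1 →
      3 * echo m ^ 2 * echo (m+3) ^ 2 + echo m * echo (m+2) ^ 3 +
        echo (m+1) ^ 3 * echo (m+3) - echo (m+1) ^ 2 * echo (m+2) ^ 2 = 0) ∧
    ((m+3) % 3 = 2 →
      echo m ^ 2 * echo (m+3) ^ 2 + 3 * echo m * echo (m+2) ^ 3 +
        echo (m+1) ^ 3 * echo (m+3) - 3 * echo (m+1) ^ 2 * echo (m+2) ^ 2 = 0) := by
  intro m
  induction m with
  | zero =>
      have e0 : echo 0 = 1 := rfl
      have e1 : echo 1 = 1 := rfl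
      have e2 : echo 2 = 2 := rfl
      have e3 : echo 3 = 1 := rfl
      refine ⟨fun _ => ?_, fun h => by omega, fun h => by omega⟩
      norm_num [e0, e1, e2, e3]
  | succ k ih =>
      have hne := echo_ne_zero k
      have hrec := echo_rec k hne
      simp only [show k+1+3 = k+4 by omega, show k+1+2 = k+3 by omega,
        show k+1+1 = k+2 by omega]
      refine ⟨fun hr => ?_, fun hr => ?_, fun hr => ?_⟩
      · -- (k+4)%3 = 0, so k%3 = 2, IH third, c_rec = 3, pattern r'=0 : p'=1, r''=3
        rw [if_pos (show 3 ∣ (k+4) by omega)] at hrec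
        have hI := ih.2.2 (by omega)
        have hmul : echo k ^ 2 *
            (echo (k+1) ^ 2 * echo (k+4) ^ 2 + echo (k+1) * echo (k+3) ^ 3 +
              3 * echo (k+2) ^ 3 * echo (k+4) - 3 * echo (k+2) ^ 2 * echo (k+3) ^ 2) = 0 := by
          linear_combination (echo (k+1) ^ 2 * (echo k * echo (k+4) +
              (echo (k+3) * echo (k+1) - 3 * echo (k+2) ^ 2)) + 3 * echo (k+2) ^ 3 * echo k) * hrec +
            (echo (k+3) * echo (k+1) - 3 * echo (k+2) ^ 2) * hI
        exact (mul_eq_zero.mp hmul).resolve_left (pow_ne_zero 2 hne)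
      · -- (k+4)%3 = 1, so k%3 = 0, IH first, c_rec = 1, pattern r'=1 : p'=3, r''=1
        rw [if_neg (show ¬ 3 ∣ (k+4) by omega)] at hrec
        have hI := ih.1 (by omega)
        have hmul : echo k ^ 2 *
            (3 * echo (k+1) ^ 2 * echo (k+4) ^ 2 + echo (k+1) * echo (k+3) ^ 3 +
              echo (k+2) ^ 3 * echo (k+4) - echo (k+2) ^ 2 * echo (k+3) ^ 2) = 0 := by
          linear_combination (3 * echo (k+1) ^ 2 * (echo k * echo (k+4) +
              (echo (k+3) * echo (k+1) - 1 * echo (k+2) ^ 2)) + echo (k+2) ^ 3 * echo k) * hrec +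
            (echo (k+3) * echo (k+1) - 1 * echo (k+2) ^ 2) * hI
        exact (mul_eq_zero.mp hmul).resolve_left (pow_ne_zero 2 hne)
      · -- (k+4)%3 = 2, so k%3 = 1, IH second, c_rec = 1, pattern r'=2 : p'=1, r''=1
        rw [if_neg (show ¬ 3 ∣ (k+4) by omega)] at hrec
        have hI := ih.2.1 (by omega)
        have hmul : echo k ^ 2 *
            (echo (k+1) ^ 2 * echo (k+4) ^ 2 + 3 * echo (k+1) * echo (k+3) ^ 3 +
              echo (k+2) ^ 3 * echo (k+4) - 3 * echo (k+2) ^ 2 * echo (k+3) ^ 2) = 0 := by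
          linear_combination (echo (k+1) ^ 2 * (echo k * echo (k+4) +
              (echo (k+3) * echo (k+1) - 1 * echo (k+2) ^ 2)) + echo (k+2) ^ 3 * echo k) * hrec +
            (echo (k+3) * echo (k+1) - 1 * echo (k+2) ^ 2) * hI
        exact (mul_eq_zero.mp hmul).resolve_left (pow_ne_zero 2 hne)

/-- The vanishing of the quantity h(n) attached to the ECHO sequence. -/
theorem echo_h_vanishes :
    ∀ n : ℕ, 3 ≤ n →
      (n % 3 = 0 →
        echo (n - 3) ^ 2 * echo n ^ 2 + echo (n - 3) * echo (n - 1) ^ 3 +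
          3 * echo (n - 2) ^ 3 * echo n - 3 * echo (n - 2) ^ 2 * echo (n - 1) ^ 2 = 0) ∧
      (n % 3 = 1 →
        3 * echo (n - 3) ^ 2 * echo n ^ 2 + echo (n - 3) * echo (n - 1) ^ 3 +
          echo (n - 2) ^ 3 * echo n - echo (n - 2) ^ 2 * echo (n - 1) ^ 2 = 0) ∧
      (n % 3 = 2 →
        echo (n - 3) ^ 2 * echo n ^ 2 + 3 * echo (n - 3) * echo (n - 1) ^ 3 +
          echo (n - 2) ^ 3 * echo n - 3 * echo (n - 2) ^ 2 * echo (n - 1) ^ 2 = 0) := by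
  intro n hn
  obtain ⟨m, rfl⟩ : ∃ m, n = m + 3 := ⟨n - 3, by omega⟩
  simpa only [show m+3-3 = m by omega, show m+3-1 = m+2 by omega,
    show m+3-2 = m+1 by omega] using key m
end

section
/- No term of the ECHO sequence is divisible by 5: for every n ≥ 0, 5 does not divide b n. Moreover the sequence is periodic modulo 5 with period 24: for every n ≥ 0, 5 divides b (n+24) − b n. -/
namespace Rat

variable {α : Type*} [DivisionRing α] {q r : ℚ} {x y : α}

/-- `x` is the reduction of `q` in `α`; asking for an invertible denominator is what makes
reduction compatible with the ring operations. -/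
def ReducesTo (q : ℚ) (x : α) : Prop := (q.den : α) ≠ 0 ∧ (q : α) = x

theorem reducesTo_intCast (n : ℤ) : ReducesTo (n : ℚ) (n : α) := ⟨by simp, by simp⟩

theorem ReducesTo.mul (hq : ReducesTo q x) (hr : ReducesTo r y) : ReducesTo (q * r) (x * y) :=
  ⟨ne_zero_of_dvd_ne_zero (by simpa using mul_ne_zero hq.1 hr.1)
      (Nat.cast_dvd_cast (mul_den_dvd q r)),
    by rw [cast_mul_of_ne_zero hq.1 hr.1, hq.2, hr.2]⟩

theorem ReducesTo.sub (hq : ReducesTo q x) (hr : ReducesTo r y) : ReducesTo (q - r) (x - y) :=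
  ⟨ne_zero_of_dvd_ne_zero (by simpa using mul_ne_zero hq.1 hr.1)
      (Nat.cast_dvd_cast (sub_den_dvd q r)),
    by rw [cast_sub_of_ne_zero hq.1 hr.1, hq.2, hr.2]⟩

theorem ReducesTo.pow (hq : ReducesTo q x) : ∀ n : ℕ, ReducesTo (q ^ n) (x ^ n)
  | 0 => by simpa using reducesTo_intCast (α := α) 1
  | n + 1 => by simpa only [pow_succ] using (hq.pow n).mul hq

theorem ReducesTo.eq_zero_iff (hq : ReducesTo q x) : x = 0 ↔ (q.num : α) = 0 := by
  rw [← hq.2, cast_def, div_eq_zero_iff, or_iff_left hq.1]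

theorem ReducesTo.inv (hq : ReducesTo q x) (hx : x ≠ 0) : ReducesTo q⁻¹ x⁻¹ := by
  have hnum : (q.num : α) ≠ 0 := mt hq.eq_zero_iff.2 hx
  have hq0 : q ≠ 0 := by rintro rfl; simp at hnum
  refine ⟨?_, by rw [cast_inv_of_ne_zero hnum, hq.2]⟩
  rw [den_inv_of_ne_zero hq0]
  rcases Int.natAbs_eq q.num with h | h <;> rw [h] at hnum <;> simpa using hnum

theorem ReducesTo.div (hq : ReducesTo q x) (hr : ReducesTo r y) (hy : y ≠ 0) :
    ReducesTo (q / r) (x / y) := by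
  simpa only [div_eq_mul_inv] using hq.mul (hr.inv hy)

end Rat

open Rat

def echoIn (α : Type*) [DivisionRing α] : ℕ → α
  | 0 => 1
  | 1 => 1
  | 2 => 2
  | 3 => 1
  | n + 4 =>
      (echoIn α (n + 3) * echoIn α (n + 1) - (if 3 ∣ (n + 4) then 3 else 1) * echoIn α (n + 2) ^ 2) /
        echoIn α n

theorem echo_reducesTo {α : Type*} [DivisionRing α] (h : ∀ n, echoIn α n ≠ 0) :
    ∀ n, ReducesTo (echo n) (echoIn α n)
  | 0 => by simpa [echo, echoIn] using reducesTo_intCast (α := α) 1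
  | 1 => by simpa [echo, echoIn] using reducesTo_intCast (α := α) 1
  | 2 => by simpa [echo, echoIn] using reducesTo_intCast (α := α) 2
  | 3 => by simpa [echo, echoIn] using reducesTo_intCast (α := α) 1
  | n + 4 => by
    have hc : ReducesTo (if 3 ∣ n + 4 then 3 else 1 : ℚ) (if 3 ∣ n + 4 then 3 else 1 : α) := by
      split_ifs
      · simpa using reducesTo_intCast (α := α) 3
      · simpa using reducesTo_intCast (α := α) 1
    rw [echo, echoIn]
    exact (((echo_reducesTo h (n + 3)).mul (echo_reducesTo h (n + 1))).sub
      (hc.mul ((echo_reducesTo h (n + 2)).pow 2))).div (echo_reducesTo h n) (h n)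

instance Nat.fact_prime_five : Fact (Nat.Prime 5) := ⟨Nat.prime_five⟩

theorem echoIn_zmod_five_periodic : Function.Periodic (echoIn (ZMod 5)) 24
  | 0 | 1 | 2 | 3 => by decide +kernel
  | n + 4 => by
    have h0 : echoIn (ZMod 5) (n + 24) = _ := echoIn_zmod_five_periodic n
    have h1 : echoIn (ZMod 5) (n + 24 + 1) = _ := echoIn_zmod_five_periodic (n + 1)
    have h2 : echoIn (ZMod 5) (n + 24 + 2) = _ := echoIn_zmod_five_periodic (n + 2)
    have h3 : echoIn (ZMod 5) (n + 24 + 3) = _ := echoIn_zmod_five_periodic (n + 3)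
    have hc : 3 ∣ n + 24 + 4 ↔ 3 ∣ n + 4 := by omega
    rw [show n + 4 + 24 = n + 24 + 4 from rfl, echoIn.eq_5 _ (n + 24), echoIn.eq_5 _ n,
      h0, h1, h2, h3]
    simp only [hc]

theorem echoIn_zmod_five_ne_zero (n : ℕ) : echoIn (ZMod 5) n ≠ 0 := by
  have h : ∀ k < 24, echoIn (ZMod 5) k ≠ 0 := by decide +kernel
  rw [← echoIn_zmod_five_periodic.map_mod_nat]
  exact h _ (n.mod_lt (by norm_num))

theorem intCast_zmod_five_eq_zero_iff (a : ℤ) : (a : ZMod 5) = 0 ↔ (5 : ℤ) ∣ a :=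
  ZMod.intCast_zmod_eq_zero_iff_dvd a 5

/-- No term of the ECHO sequence is divisible by 5, and the sequence is periodic modulo 5
with period 24. -/
theorem echo_not_div_five_and_periodic :
    (∀ n : ℕ, ¬ (5 : ℤ) ∣ (echo n).num) ∧
      ∀ n : ℕ, (5 : ℤ) ∣ (echo (n + 24) - echo n).num := by
  have hred := echo_reducesTo echoIn_zmod_five_ne_zero
  refine ⟨fun n => ?_, fun n => ?_⟩
  · rw [← intCast_zmod_five_eq_zero_iff, ← (hred n).eq_zero_iff]
    exact echoIn_zmod_five_ne_zero n
  · rw [← intCast_zmod_five_eq_zero_iff, ← ((hred (n + 24)).sub (hred n)).eq_zero_iff,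
      echoIn_zmod_five_periodic, sub_self]
end
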